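/- arXiv:2007.05316 — 4 statements merged into one kernel-verified Lean document; each statement's English description precedes it below -/
import Mathlib

section
/- Let G be a simple graph with n̄ vertices (n̄ ≥ 2) and m̄ edges, and with maximum degree Δ. Let 0 < q ≤ 1 be a real number and suppose that Δ ≤ m̄·q/(20·log₂ n̄) and q²·m̄ ≥ 400·(log₂ n̄)². Form a random vertex subset S by letting each vertex join S independently with probability q. Then with probability at least 1 − 10·(log₂ n̄)/n̄⁵, the number of edges of G having both endpoints in S is at most 6·q²·m̄. -/
/-!
Moment method. Let `X` be the number of edges inside `S` and `B = q²m + 2Kq·Δ + 4K²`.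
Since `X · 1{A ⊆ S} = ∑ₑ 1{A ∪ e ⊆ S}` and `∑ₑ q^|e \ A| ≤ B` whenever `|A| ≤ 2K`, induction on
`k` gives `E[X^k ; A ⊆ S] ≤ B^k q^|A|` for `|A| + 2k ≤ 2K`; in particular `E[X^K] ≤ B^K`.
The hypotheses make `B ≤ 2q²m` for `K = ⌈5 log₂ n⌉`, so Markov's inequality applied to `X^K`
bounds `P(X > 6q²m)` by `3^(-K) ≤ n^(-5)`.
-/

set_option linter.deprecated false

open MeasureTheory ProbabilityTheory Finset

lemma Finset.card_sym2_le_sq {α : Type*} [DecidableEq α] (A : Finset α) : #A.sym2 ≤ #A ^ 2 :=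
  calc #A.sym2 ≤ #(A ×ˢ A) := sym2_eq_image (s := A) ▸ card_image_le
    _ = #A ^ 2 := by rw [card_product, sq]

lemma ProbabilityTheory.one_sub_integral_pow_div_le_measureReal {Ω : Type*} [MeasurableSpace Ω]
    {μ : Measure Ω} [IsProbabilityMeasure μ] {X : Ω → ℝ} (hXm : Measurable X) (hX : 0 ≤ X)
    {k : ℕ} (hint : Integrable (fun ω => X ω ^ k) μ) {T : ℝ} (hT : 0 < T) :
    1 - (∫ ω, X ω ^ k ∂μ) / T ^ k ≤ μ.real {ω | X ω ≤ T} := by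
  have hmarkov := mul_meas_ge_le_integral_of_nonneg
    (ae_of_all _ fun ω => pow_nonneg (hX ω) k) hint (T ^ k)
  have hsub : {ω | X ω ≤ T}ᶜ ⊆ {ω | T ^ k ≤ X ω ^ k} := fun ω (hω : ¬X ω ≤ T) =>
    pow_le_pow_left₀ hT.le (not_le.1 hω).le k
  have htail : μ.real {ω | X ω ≤ T}ᶜ ≤ (∫ ω, X ω ^ k ∂μ) / T ^ k := by
    rw [le_div_iff₀ (by positivity), mul_comm]
    exact (mul_le_mul_of_nonneg_left (measureReal_mono hsub) (by positivity)).trans hmarkov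
  rw [probReal_compl_eq_one_sub (measurableSet_le hXm measurable_const)] at htail
  linarith

namespace SimpleGraph

variable {V : Type*} [Fintype V] [DecidableEq V] (G : SimpleGraph V) [DecidableRel G.Adj]

lemma card_edges_meeting_le (A : Finset V) :
    #{e ∈ G.edgeFinset | ∃ v ∈ A, v ∈ e} ≤ #A * G.maxDegree := by
  refine (card_le_card fun e he => ?_).trans
    (card_biUnion_le_card_mul A (fun v => G.incidenceFinset v) _ fun v _ => ?_)
  · obtain ⟨he, v, hv, hve⟩ := mem_filter.1 he
    exact mem_biUnion.2 ⟨v, hv, (G.mem_incidenceFinset v e).2 ⟨mem_edgeFinset.1 he, hve⟩⟩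
  · exact (G.card_incidenceFinset_eq_degree v).trans_le (G.degree_le_maxDegree v)

lemma pow_card_toFinset_sdiff_le {q : ℝ} (hq0 : 0 ≤ q) (hq1 : q ≤ 1) (A : Finset V)
    {e : Sym2 V} (he : e ∈ G.edgeFinset) :
    q ^ #(e.toFinset \ A) ≤
      q ^ 2 + q * (if ∃ v ∈ A, v ∈ e then 1 else 0) + (if e ∈ A.sym2 then 1 else 0) := by
  by_cases hin : e ∈ A.sym2
  · have : e.toFinset \ A = ∅ := sdiff_eq_empty_iff_subset.2 fun v hv =>
      mem_sym2_iff.1 hin v (Sym2.mem_toFinset.1 hv)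
    rw [this, if_pos hin, card_empty, pow_zero]
    exact le_add_of_nonneg_left (by split_ifs <;> positivity)
  by_cases hmeet : ∃ v ∈ A, v ∈ e
  · have hne : (e.toFinset \ A).Nonempty := by
      obtain ⟨v, hve, hvA⟩ := not_forall₂.1 (mt mem_sym2_iff.2 hin)
      exact ⟨v, mem_sdiff.2 ⟨Sym2.mem_toFinset.2 hve, hvA⟩⟩
    rw [if_pos hmeet, if_neg hin]
    nlinarith [pow_le_of_le_one hq0 hq1 hne.card_pos.ne']
  · have : e.toFinset \ A = e.toFinset := sdiff_eq_self_of_disjoint <| Finset.disjoint_left.2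
      fun v hve hvA => hmeet ⟨v, hvA, Sym2.mem_toFinset.1 hve⟩
    rw [this, Sym2.card_toFinset_of_not_isDiag _ (not_isDiag_of_mem_edgeFinset he), if_neg hmeet,
      if_neg hin]
    simp

lemma sum_pow_card_toFinset_sdiff_le {q : ℝ} (hq0 : 0 ≤ q) (hq1 : q ≤ 1) (A : Finset V) :
    ∑ e ∈ G.edgeFinset, q ^ #(e.toFinset \ A) ≤
      q ^ 2 * #G.edgeFinset + q * (#A * G.maxDegree) + #A ^ 2 := by
  calc ∑ e ∈ G.edgeFinset, q ^ #(e.toFinset \ A)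
      ≤ ∑ e ∈ G.edgeFinset,
          (q ^ 2 + q * (if ∃ v ∈ A, v ∈ e then 1 else 0) + (if e ∈ A.sym2 then 1 else 0)) :=
        sum_le_sum fun e he => G.pow_card_toFinset_sdiff_le hq0 hq1 A he
    _ = q ^ 2 * #G.edgeFinset + q * #{e ∈ G.edgeFinset | ∃ v ∈ A, v ∈ e} +
          #{e ∈ G.edgeFinset | e ∈ A.sym2} := by
        rw [sum_add_distrib, sum_add_distrib, ← mul_sum, sum_boole, sum_boole, sum_const,
          nsmul_eq_mul, mul_comm]
    _ ≤ q ^ 2 * #G.edgeFinset + q * (#A * G.maxDegree) + #A ^ 2 := by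
        gcongr
        · exact_mod_cast G.card_edges_meeting_le A
        · exact_mod_cast (card_le_card fun e he => (mem_filter.1 he).2).trans A.card_sym2_le_sq

end SimpleGraph

namespace RandomVertexSubset

variable {V : Type*}

noncomputable abbrev bernoulliPi (V : Type*) [Fintype V] (p : NNReal) (hp : p ≤ 1) :
    Measure (V → Bool) :=
  Measure.pi fun _ : V => (PMF.bernoulli p hp).toMeasure

/-- The event `A ⊆ S` for the random set `S = {v | f v = true}`. -/
def allTrue (A : Finset V) : Set (V → Bool) := {f | ∀ v ∈ A, f v = true}

lemma allTrue_union [DecidableEq V] (A B : Finset V) :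
    allTrue (A ∪ B) = allTrue A ∩ allTrue B := by
  ext f; simp [allTrue, or_imp, forall_and]

lemma measureReal_allTrue [Fintype V] (p : NNReal) (hp : p ≤ 1) (A : Finset V) :
    (bernoulliPi V p hp).real (allTrue A) = (p : ℝ) ^ #A := by
  classical
  have hpi : allTrue A = Set.univ.pi fun v => if v ∈ A then {true} else Set.univ := by
    ext f
    refine forall_congr' fun v => ?_
    by_cases hv : v ∈ A <;> simp [hv]
  have htrue : (PMF.bernoulli p hp).toMeasure {true} = p := by
    rw [PMF.toMeasure_apply_singleton _ _ (measurableSet_singleton _), PMF.bernoulli_apply]; rfl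
  rw [measureReal_def, hpi, Measure.pi_pi]
  simp only [apply_ite (PMF.bernoulli p hp).toMeasure, htrue, measure_univ]
  rw [prod_ite_mem, univ_inter, prod_const]
  simp

variable [Fintype V] [DecidableEq V]

def edgesWithin (E : Finset (Sym2 V)) (f : V → Bool) : ℕ :=
  #(E ∩ ({v | f v = true} : Finset V).sym2)

lemma edgesWithin_eq_sum_indicator (E : Finset (Sym2 V)) (f : V → Bool) :
    (edgesWithin E f : ℝ) = ∑ e ∈ E, (allTrue e.toFinset).indicator 1 f := by
  have hmem (e : Sym2 V) : e ∈ ({v | f v = true} : Finset V).sym2 ↔ f ∈ allTrue e.toFinset := by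
    simp [mem_sym2_iff, allTrue]
  rw [edgesWithin, ← filter_mem_eq_inter, ← sum_boole]
  refine sum_congr rfl fun e _ => ?_
  split_ifs with h
  · exact (Set.indicator_of_mem ((hmem e).1 h) 1).symm
  · exact (Set.indicator_of_notMem (mt (hmem e).2 h) 1).symm

lemma edgesWithin_mul_indicator_allTrue (E : Finset (Sym2 V)) (A : Finset V) (f : V → Bool) :
    (edgesWithin E f : ℝ) * (allTrue A).indicator 1 f =
      ∑ e ∈ E, (allTrue (A ∪ e.toFinset)).indicator 1 f := by
  rw [edgesWithin_eq_sum_indicator, sum_mul]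
  simp only [allTrue_union, Set.inter_indicator_one, Pi.mul_apply, mul_comm]

lemma integral_edgesWithin_pow_mul_indicator_le (p : NNReal) (hp : p ≤ 1) (E : Finset (Sym2 V))
    (B : ℝ) (N : ℕ) (hB : ∀ A : Finset V, #A ≤ N → ∑ e ∈ E, (p : ℝ) ^ #(e.toFinset \ A) ≤ B)
    (k : ℕ) (A : Finset V) (hk : #A + 2 * k ≤ N) :
    ∫ f, (edgesWithin E f : ℝ) ^ k * (allTrue A).indicator 1 f ∂(bernoulliPi V p hp) ≤
      B ^ k * (p : ℝ) ^ #A := by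
  induction k generalizing A with
  | zero =>
    simp [integral_indicator_one MeasurableSet.of_discrete, measureReal_allTrue]
  | succ k ih =>
    have hB0 : 0 ≤ B := (sum_nonneg fun _ _ => by positivity).trans (hB ∅ (Nat.zero_le N))
    have hcard (e : Sym2 V) : #(A ∪ e.toFinset) = #A + #(e.toFinset \ A) := by
      rw [union_comm, ← card_sdiff_add_card, add_comm]
    calc ∫ f, (edgesWithin E f : ℝ) ^ (k + 1) * (allTrue A).indicator 1 f ∂(bernoulliPi V p hp)
        = ∑ e ∈ E, ∫ f, (edgesWithin E f : ℝ) ^ k * (allTrue (A ∪ e.toFinset)).indicator 1 f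
            ∂(bernoulliPi V p hp) := by
          simp_rw [pow_succ, mul_assoc, edgesWithin_mul_indicator_allTrue, mul_sum]
          exact integral_finsetSum _ fun _ _ => Integrable.of_finite
      _ ≤ ∑ e ∈ E, B ^ k * (p : ℝ) ^ #(A ∪ e.toFinset) := by
          refine sum_le_sum fun e _ => ih _ ?_
          have : #e.toFinset ≤ 2 := by rw [Sym2.card_toFinset]; split_ifs <;> omega
          have := card_union_le A e.toFinset
          omega
      _ = B ^ k * (p : ℝ) ^ #A * ∑ e ∈ E, (p : ℝ) ^ #(e.toFinset \ A) := by
          simp_rw [hcard, pow_add, mul_sum, mul_assoc]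
      _ ≤ B ^ k * (p : ℝ) ^ #A * B := by
          gcongr
          exact hB A (by omega)
      _ = B ^ (k + 1) * (p : ℝ) ^ #A := by ring

lemma integral_edgesWithin_pow_le (p : NNReal) (hp : p ≤ 1) (E : Finset (Sym2 V)) (B : ℝ) (k : ℕ)
    (hB : ∀ A : Finset V, #A ≤ 2 * k → ∑ e ∈ E, (p : ℝ) ^ #(e.toFinset \ A) ≤ B) :
    ∫ f, (edgesWithin E f : ℝ) ^ k ∂(bernoulliPi V p hp) ≤ B ^ k := by
  simpa [allTrue] using integral_edgesWithin_pow_mul_indicator_le p hp E B _ hB k ∅ (by simp)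

lemma integral_edgesWithin_edgeFinset_pow_le (G : SimpleGraph V) [DecidableRel G.Adj] {q : ℝ}
    (hq0 : 0 ≤ q) (hq1 : q ≤ 1) (k : ℕ) :
    ∫ f, (edgesWithin G.edgeFinset f : ℝ) ^ k
        ∂(bernoulliPi V q.toNNReal (Real.toNNReal_le_one.mpr hq1)) ≤
      (q ^ 2 * #G.edgeFinset + q * (2 * k * G.maxDegree) + (2 * k) ^ 2) ^ k := by
  refine integral_edgesWithin_pow_le _ _ _ _ k fun A hA => ?_
  rw [Real.coe_toNNReal q hq0]
  have hA' : (#A : ℝ) ≤ 2 * k := by exact_mod_cast hA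
  refine (G.sum_pow_card_toFinset_sdiff_le hq0 hq1 A).trans ?_
  gcongr

lemma integral_edgesWithin_edgeFinset_pow_le_two_mul (G : SimpleGraph V) [DecidableRel G.Adj]
    {q L : ℝ} (hq0 : 0 ≤ q) (hq1 : q ≤ 1) {k : ℕ} (hk : (k : ℝ) ≤ 6 * L)
    (hΔ : G.maxDegree * (20 * L) ≤ #G.edgeFinset * q) (hm : 400 * L ^ 2 ≤ q ^ 2 * #G.edgeFinset) :
    ∫ f, (edgesWithin G.edgeFinset f : ℝ) ^ k
        ∂(bernoulliPi V q.toNNReal (Real.toNNReal_le_one.mpr hq1)) ≤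
      (2 * (q ^ 2 * #G.edgeFinset)) ^ k := by
  refine (integral_edgesWithin_edgeFinset_pow_le G hq0 hq1 k).trans
    (pow_le_pow_left₀ (by positivity) ?_ k)
  have : q * (2 * k * G.maxDegree) ≤ 3 / 5 * (q ^ 2 * #G.edgeFinset) :=
    calc q * (2 * k * G.maxDegree) ≤ q * (2 * (6 * L) * G.maxDegree) := by gcongr
      _ = 3 / 5 * q * (G.maxDegree * (20 * L)) := by ring
      _ ≤ 3 / 5 * q * (#G.edgeFinset * q) := by gcongr
      _ = 3 / 5 * (q ^ 2 * #G.edgeFinset) := by ring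
  nlinarith [(k.cast_nonneg : (0 : ℝ) ≤ k)]

end RandomVertexSubset

lemma Real.pow_le_two_pow_ceil_mul_logb {x : ℝ} (hx : 0 < x) (k : ℕ) :
    x ^ k ≤ 2 ^ ⌈k * Real.logb 2 x⌉₊ := by
  rw [← Real.rpow_natCast 2, ← Real.logb_le_iff_le_rpow (by norm_num) (by positivity),
    Real.logb_pow]
  exact Nat.le_ceil _

open RandomVertexSubset

theorem stmt0_general {V : Type*} [Fintype V] [DecidableEq V]
    (G : SimpleGraph V) [DecidableRel G.Adj]
    (n m Δ : ℕ) (hn : 2 ≤ n)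
    (hm : G.edgeFinset.card = m) (hΔ : G.maxDegree = Δ)
    (q : ℝ) (hq0 : 0 < q) (hq1 : q ≤ 1)
    (hΔq : (Δ : ℝ) ≤ m * q / (20 * Real.logb 2 n))
    (hmq : 400 * (Real.logb 2 n) ^ 2 ≤ q ^ 2 * m) :
    1 - 10 * Real.logb 2 n / (n : ℝ) ^ 5 ≤
      (Measure.pi (fun _ : V =>
          (PMF.bernoulli (Real.toNNReal q) (Real.toNNReal_le_one.mpr hq1)).toMeasure)
        {f : V → Bool |
          (((G.edgeFinset ∩ (Finset.univ.filter (fun v => f v = true)).sym2).card : ℝ))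
            ≤ 6 * q ^ 2 * m}).toReal := by
  set L := Real.logb 2 n
  have hL : 1 ≤ L := by
    rw [← Real.logb_self_eq_one (b := 2) (by norm_num)]
    exact Real.logb_le_logb_of_le (by norm_num) (by norm_num) (by exact_mod_cast hn)
  set K := ⌈5 * L⌉₊
  have hK : (K : ℝ) ≤ 6 * L := by linarith [Nat.ceil_lt_add_one (show 0 ≤ 5 * L by linarith)]
  have hn5 : (n : ℝ) ^ 5 ≤ 3 ^ K := (Real.pow_le_two_pow_ceil_mul_logb (by positivity) 5).trans
    (pow_le_pow_left₀ (by norm_num) (by norm_num) _)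
  have hmoment := integral_edgesWithin_edgeFinset_pow_le_two_mul G hq0.le hq1 hK
    (by rw [hΔ, hm, ← le_div_iff₀ (by positivity)]; exact hΔq) (by rwa [hm])
  rw [hm] at hmoment
  have hm0 : 0 < q ^ 2 * m := by nlinarith
  refine le_trans ?_ (one_sub_integral_pow_div_le_measureReal (k := K) Measurable.of_discrete
    (fun f => Nat.cast_nonneg (edgesWithin G.edgeFinset f)) Integrable.of_finite
    (by linarith : 0 < 6 * q ^ 2 * m))
  gcongr 1 - ?_
  calc _ ≤ (2 * (q ^ 2 * m)) ^ K / (6 * q ^ 2 * m) ^ K := by gcongr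
    _ = 1 / 3 ^ K := by
        rw [← div_pow, ← one_div_pow]
        congr 1
        rw [div_eq_div_iff (by linarith) (by norm_num)]
        ring
    _ ≤ 1 / n ^ 5 := by gcongr
    _ ≤ 10 * L / n ^ 5 := by gcongr; linarith

/-- Random-subset edge-count concentration (Lemma 4.2 of Chang et al.):
if each vertex joins `S` independently with probability `q`, where
`Δ ≤ m·q/(20 log₂ n)` and `q²·m ≥ 400 (log₂ n)²`, then with probability at
least `1 - 10 log₂ n / n⁵` the number of edges induced by `S` is at most
`6 q² m`. -/
theorem stmt0 {V : Type*} [Fintype V] [DecidableEq V]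
    (G : SimpleGraph V) [DecidableRel G.Adj]
    (n m Δ : ℕ) (hn : 2 ≤ n) (hV : Fintype.card V = n)
    (hm : G.edgeFinset.card = m) (hΔ : G.maxDegree = Δ)
    (q : ℝ) (hq0 : 0 < q) (hq1 : q ≤ 1)
    (hΔq : (Δ : ℝ) ≤ m * q / (20 * Real.logb 2 n))
    (hmq : 400 * (Real.logb 2 n) ^ 2 ≤ q ^ 2 * m) :
    1 - 10 * Real.logb 2 n / (n : ℝ) ^ 5 ≤
      (Measure.pi (fun _ : V =>
          (PMF.bernoulli (Real.toNNReal q) (Real.toNNReal_le_one.mpr hq1)).toMeasure)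
        {f : V → Bool |
          (((G.edgeFinset ∩ (Finset.univ.filter (fun v => f v = true)).sym2).card : ℝ))
            ≤ 6 * q ^ 2 * m}).toReal :=
  stmt0_general G n m Δ hn hm hΔ q hq0 hq1 hΔq hmq
end

section
/- Let G be a simple graph on a vertex set V of size n, with n ≥ 2, and let C ⊆ V. Call a vertex v ∉ C C-light if it has at most n^{1/4} neighbors in C, and call a vertex u ∈ C bad if it has more than 100·n^{1/2}·log₂ n C-light neighbors. Then the number of bad vertices is at most n^{3/4}/(100·log₂ n). -/
/-- Let `G` be a simple graph on `n ≥ 2` vertices and `C` a vertex subset.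
A vertex `v ∉ C` is `C`-light if it has at most `n^(1/4)` neighbors in `C`;
a vertex `u ∈ C` is bad if it has more than `100 · n^(1/2) · log₂ n` `C`-light
neighbors. Then there are at most `n^(3/4) / (100 · log₂ n)` bad vertices. -/
theorem stmt2 {V : Type*} [Fintype V] (G : SimpleGraph V)
    (n : ℕ) (hn : 2 ≤ n) (hV : Fintype.card V = n) (C : Set V) :
    ({u : V | u ∈ C ∧
        100 * (n : ℝ) ^ ((1 : ℝ) / 2) * Real.logb 2 n <
          (({v : V | G.Adj u v ∧ v ∉ C ∧
              (({w : V | G.Adj v w ∧ w ∈ C}.ncard : ℝ)) ≤ (n : ℝ) ^ ((1 : ℝ) / 4)}.ncard : ℝ))}.ncard : ℝ)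
      ≤ (n : ℝ) ^ ((3 : ℝ) / 4) / (100 * Real.logb 2 n) := by
  classical
  have hncard : ∀ p : V → Prop, {v | p v}.ncard = (Finset.univ.filter p).card := by
    intro p
    rw [← Set.ncard_coe_finset]
    congr 1
    ext v
    simp
  have hnpos : (0:ℝ) < n := by
    have : 0 < n := lt_of_lt_of_le (by norm_num) hn
    exact_mod_cast this
  have hlog : (1:ℝ) ≤ Real.logb 2 n := by
    have h2 : Real.logb 2 2 ≤ Real.logb 2 n :=
      Real.logb_le_logb_of_le one_lt_two (by norm_num) (by exact_mod_cast hn)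
    simpa using h2
  set T : ℝ := 100 * (n : ℝ) ^ ((1 : ℝ) / 2) * Real.logb 2 n with hTdef
  set light : V → Prop := fun v => v ∉ C ∧
    (({w : V | G.Adj v w ∧ w ∈ C}.ncard : ℝ)) ≤ (n : ℝ) ^ ((1 : ℝ) / 4) with hlightdef
  set Lf : V → Finset V := fun u => Finset.univ.filter (fun v => G.Adj u v ∧ light v) with hLfdef
  set Bf : Finset V := Finset.univ.filter (fun u => u ∈ C ∧ T < ((Lf u).card : ℝ)) with hBfdef
  have hinner : ∀ u : V, {v : V | G.Adj u v ∧ v ∉ C ∧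
      (({w : V | G.Adj v w ∧ w ∈ C}.ncard : ℝ)) ≤ (n : ℝ) ^ ((1 : ℝ) / 4)}.ncard
      = (Lf u).card := by
    intro u
    rw [hncard]
    congr 1
    ext v
    simp only [Finset.mem_filter, Finset.mem_univ, true_and, hLfdef, hlightdef, and_assoc]
  have hgoalset : {u : V | u ∈ C ∧ T < (({v : V | G.Adj u v ∧ v ∉ C ∧
      (({w : V | G.Adj v w ∧ w ∈ C}.ncard : ℝ)) ≤ (n : ℝ) ^ ((1 : ℝ) / 4)}.ncard : ℝ))}.ncard
      = Bf.card := by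
    rw [hncard]
    congr 1
    ext u
    simp only [Finset.mem_filter, Finset.mem_univ, true_and, hBfdef, hinner]
  rw [hgoalset]
  -- lower bound for the double count
  have hBT : (Bf.card : ℝ) * T ≤ ∑ u ∈ Bf, ((Lf u).card : ℝ) := by
    have h1 : (Bf.card : ℝ) * T = ∑ _u ∈ Bf, T := by
      rw [Finset.sum_const, nsmul_eq_mul]
    rw [h1]
    refine Finset.sum_le_sum (fun u hu => ?_)
    rw [hBfdef, Finset.mem_filter] at hu
    exact hu.2.2.le
  -- swap the double count
  have hswapN : ∑ u ∈ Bf, (Lf u).card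
      = ∑ v : V, (Bf.filter (fun u => G.Adj u v ∧ light v)).card := by
    simp only [hLfdef, Finset.card_filter]
    exact Finset.sum_comm
  have hswap : ∑ u ∈ Bf, ((Lf u).card : ℝ)
      = ∑ v : V, ((Bf.filter (fun u => G.Adj u v ∧ light v)).card : ℝ) := by
    exact_mod_cast congrArg (Nat.cast : ℕ → ℝ) hswapN
  -- per-vertex upper bound
  have hv : ∀ v : V, ((Bf.filter (fun u => G.Adj u v ∧ light v)).card : ℝ)
      ≤ (n : ℝ) ^ ((1 : ℝ) / 4) := by
    intro v
    by_cases hl : light v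
    · have h4 : (Bf.filter (fun u => G.Adj u v ∧ light v)).card
          ≤ {w : V | G.Adj v w ∧ w ∈ C}.ncard := by
        conv_rhs => rw [hncard]
        apply Finset.card_le_card
        intro u hu
        simp only [hBfdef, Finset.mem_filter, Finset.mem_univ, true_and] at hu ⊢
        exact ⟨hu.2.1.symm, hu.1.1⟩
      have h3 := hl.2
      exact le_trans (by exact_mod_cast h4) h3
    · have hempty : Bf.filter (fun u => G.Adj u v ∧ light v) = ∅ := by
        apply Finset.filter_false_of_mem
        intro u _ h
        exact hl h.2
      rw [hempty]
      simp only [Finset.card_empty, Nat.cast_zero]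
      positivity
  have hupper : ∑ v : V, ((Bf.filter (fun u => G.Adj u v ∧ light v)).card : ℝ)
      ≤ (n : ℝ) * (n : ℝ) ^ ((1 : ℝ) / 4) := by
    calc ∑ v : V, ((Bf.filter (fun u => G.Adj u v ∧ light v)).card : ℝ)
        ≤ ∑ _v : V, (n : ℝ) ^ ((1 : ℝ) / 4) := Finset.sum_le_sum (fun v _ => hv v)
      _ = (Fintype.card V : ℝ) * (n : ℝ) ^ ((1 : ℝ) / 4) := by
          rw [Finset.sum_const, nsmul_eq_mul]; rfl
      _ = (n : ℝ) * (n : ℝ) ^ ((1 : ℝ) / 4) := by rw [hV]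
  have hmain : (Bf.card : ℝ) * T ≤ (n : ℝ) * (n : ℝ) ^ ((1 : ℝ) / 4) :=
    hBT.trans (le_of_eq hswap |>.trans hupper)
  -- algebra
  have hkey : (n : ℝ) * (n : ℝ) ^ ((1 : ℝ) / 4)
      = (n : ℝ) ^ ((3 : ℝ) / 4) * (n : ℝ) ^ ((1 : ℝ) / 2) := by
    rw [← Real.rpow_add hnpos]
    nth_rewrite 1 [← Real.rpow_one (n : ℝ)]
    rw [← Real.rpow_add hnpos]
    norm_num
  rw [hkey] at hmain
  have hs : (0:ℝ) < (n : ℝ) ^ ((1 : ℝ) / 2) := Real.rpow_pos_of_pos hnpos _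
  have hlogpos : (0:ℝ) < Real.logb 2 n := lt_of_lt_of_le one_pos hlog
  rw [le_div_iff₀ (by positivity)]
  have h2 : ((Bf.card : ℝ) * (100 * Real.logb 2 n)) * ((n : ℝ) ^ ((1 : ℝ) / 2))
      ≤ ((n : ℝ) ^ ((3 : ℝ) / 4)) * ((n : ℝ) ^ ((1 : ℝ) / 2)) := by
    calc ((Bf.card : ℝ) * (100 * Real.logb 2 n)) * ((n : ℝ) ^ ((1 : ℝ) / 2))
        = (Bf.card : ℝ) * T := by rw [hTdef]; ring
      _ ≤ _ := hmain
  exact le_of_mul_le_mul_right h2 hs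
end

section
/- Let G be a simple graph on a vertex set V of size n, with n ≥ 2, admitting an orientation of maximum out-degree at most A, where A is a natural number. Let C ⊆ V with |C| = k, suppose k ≥ n^{3/4} (as real numbers), and suppose every vertex of C has at least A/(2·log₂ n) neighbors inside C. Call a vertex v ∉ C C-light if it has at most n^{1/4} neighbors in C, and call a vertex u ∈ C bad if it has more than 100·n^{1/2}·log₂ n C-light neighbors. Then the number of edges of G with both endpoints bad is at most 1/25 times the number of edges of G with both endpoints in C. -/
/-!
Each edge with both ends bad is oriented towards a bad vertex, so there are at most `A · |B|`
of them, `B` being the bad set. Counting adjacent (bad, light) pairs from both ends gives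
`|B| · 100 n^(1/2) log₂ n ≤ n · n^(1/4)`, hence `|B| · 100 log₂ n ≤ n^(3/4) ≤ k`. The handshake
lemma in `G[C]` together with the minimum degree gives `k · A ≤ 4 log₂ n · e(C)`, and combining
the three bounds yields `A · |B| ≤ e(C) / 25`.
-/

open Finset

theorem Set.ncard_mul_le_ncard_mul {α β : Type*} (r : α → β → Prop) {s : Set α} {t : Set β}
    (hs : s.Finite) (ht : t.Finite) {m n : ℝ}
    (hm : ∀ a ∈ s, m ≤ ({b | r a b} ∩ t).ncard) (hn : ∀ b ∈ t, ({a | r a b} ∩ s).ncard ≤ n) :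
    s.ncard * m ≤ t.ncard * n := by
  classical
  have above : ∀ a, ({b | r a b} ∩ t).ncard = #(ht.toFinset.bipartiteAbove r a) := fun a => by
    rw [← Set.ncard_coe_finset]; congr 1; ext; simp [and_comm]
  have below : ∀ b, ({a | r a b} ∩ s).ncard = #(hs.toFinset.bipartiteBelow r b) := fun b => by
    rw [← Set.ncard_coe_finset]; congr 1; ext; simp [and_comm]
  simpa [Set.ncard_eq_toFinset_card _ hs, Set.ncard_eq_toFinset_card _ ht, above, below] using
    card_nsmul_le_card_nsmul (s := hs.toFinset) (t := ht.toFinset) r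
      (fun a ha => (above a) ▸ hm a (by simpa using ha))
      (fun b hb => (below b) ▸ hn b (by simpa using hb))

namespace SimpleGraph

variable {V : Type*} (G : SimpleGraph V)

theorem ncard_edges_within_le_of_orientation [Finite V] (S : Set V) (A : ℕ) (o : G.edgeSet → V)
    (ho : ∀ e : G.edgeSet, o e ∈ (e : Sym2 V)) (hA : ∀ v : V, {e : G.edgeSet | o e = v}.ncard ≤ A) :
    {e | e ∈ G.edgeSet ∧ ∀ u ∈ e, u ∈ S}.ncard ≤ A * S.ncard := by
  classical
  have hS := S.toFinite
  calc {e | e ∈ G.edgeSet ∧ ∀ u ∈ e, u ∈ S}.ncard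
      ≤ (Subtype.val '' ⋃ v ∈ hS.toFinset, {e : G.edgeSet | o e = v}).ncard := by
        refine Set.ncard_le_ncard ?_ (Set.toFinite _)
        rintro e ⟨he, heS⟩
        exact ⟨⟨e, he⟩, by simpa using heS _ (ho ⟨e, he⟩), rfl⟩
    _ ≤ (⋃ v ∈ hS.toFinset, {e : G.edgeSet | o e = v}).ncard := Set.ncard_image_le (Set.toFinite _)
    _ ≤ ∑ v ∈ hS.toFinset, {e : G.edgeSet | o e = v}.ncard := set_ncard_biUnion_le _ _
    _ ≤ ∑ _v ∈ hS.toFinset, A := sum_le_sum fun v _ => hA v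
    _ = A * S.ncard := by rw [sum_const, smul_eq_mul, Set.ncard_eq_toFinset_card S hS, mul_comm]

theorem two_mul_ncard_edges_within [Fintype V] (S : Finset V) :
    2 * {e | e ∈ G.edgeSet ∧ ∀ u ∈ e, u ∈ S}.ncard = ∑ v ∈ S, (G.neighborSet v ∩ S).ncard := by
  classical
  set H := ((⊤ : G.Subgraph).induce S).spanningCoe
  have hE : H.edgeSet = {e | e ∈ G.edgeSet ∧ ∀ u ∈ e, u ∈ S} := by
    ext e
    induction e using Sym2.ind with
    | _ a b => simp [H, and_comm, and_assoc]
  have hN : ∀ v, H.neighborSet v = if v ∈ S then G.neighborSet v ∩ S else ∅ := by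
    intro v; ext w; split_ifs <;> simp [H, and_comm, *]
  have hdeg : ∀ v, H.degree v = (H.neighborSet v).ncard := fun v => by
    rw [← card_neighborSet_eq_degree, Set.ncard_eq_toFinset_card', Set.toFinset_card]
  rw [← hE, ← coe_edgeFinset, Set.ncard_coe_finset, ← sum_degrees_eq_twice_card_edges]
  simp [hdeg, hN, apply_ite, sum_ite_mem]

theorem ncard_mul_le_two_mul_ncard_edges_within [Fintype V] {S : Set V} {d : ℝ}
    (h : ∀ v ∈ S, d ≤ (G.neighborSet v ∩ S).ncard) :
    S.ncard * d ≤ 2 * {e | e ∈ G.edgeSet ∧ ∀ u ∈ e, u ∈ S}.ncard := by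
  classical
  have handshake := G.two_mul_ncard_edges_within S.toFinset
  simp only [Set.coe_toFinset, Set.mem_toFinset] at handshake
  calc (S.ncard : ℝ) * d = #S.toFinset • d := by rw [Set.ncard_eq_toFinset_card', nsmul_eq_mul]
    _ ≤ ∑ v ∈ S.toFinset, ((G.neighborSet v ∩ S).ncard : ℝ) :=
        card_nsmul_le_sum _ _ _ fun v hv => h v (Set.mem_toFinset.mp hv)
    _ = 2 * {e | e ∈ G.edgeSet ∧ ∀ u ∈ e, u ∈ S}.ncard := by exact_mod_cast handshake.symm

theorem ncard_mul_le_card_mul_of_neighbor_bounds [Fintype V] {B C L : Set V} {d D : ℝ}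
    (hd : 0 ≤ d) (hBC : B ⊆ C) (hL : ∀ v ∈ L, ((G.neighborSet v ∩ C).ncard : ℝ) ≤ d)
    (hB : ∀ u ∈ B, D ≤ (G.neighborSet u ∩ L).ncard) :
    B.ncard * D ≤ Fintype.card V * d :=
  calc B.ncard * D ≤ L.ncard * d :=
        Set.ncard_mul_le_ncard_mul G.Adj B.toFinite L.toFinite hB fun v hv => by
          have hsub : {u | G.Adj u v} ∩ B ⊆ G.neighborSet v ∩ C := fun u hu => ⟨hu.1.symm, hBC hu.2⟩
          exact le_trans (by exact_mod_cast Set.ncard_le_ncard hsub) (hL v hv)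
    _ ≤ Fintype.card V * d := by
        gcongr
        exact_mod_cast (Set.ncard_le_card L).trans_eq (Nat.card_eq_fintype_card)

end SimpleGraph

/-- Let `G` be a simple graph on `n ≥ 2` vertices admitting an orientation of
maximum out-degree at most `A`, and let `C` be a vertex set of size
`k ≥ n^(3/4)` in which every vertex has at least `A/(2 log₂ n)` neighbors
inside `C`. With `C`-light vertices being the vertices outside `C` with at
most `n^(1/4)` neighbors in `C`, and bad vertices being the vertices of `C`
with more than `100 · n^(1/2) · log₂ n` `C`-light neighbors, the number of
edges with both endpoints bad is at most `1/25` of the number of edges with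
both endpoints in `C`. -/
theorem stmt4 {V : Type*} [Fintype V] (G : SimpleGraph V)
    (n k A : ℕ) (hn : 2 ≤ n) (hV : Fintype.card V = n)
    (C : Set V) (hk : C.ncard = k) (hk34 : (n : ℝ) ^ ((3 : ℝ) / 4) ≤ (k : ℝ))
    (hdeg : ∀ u ∈ C,
      (A : ℝ) / (2 * Real.logb 2 n) ≤ ({w : V | G.Adj u w ∧ w ∈ C}.ncard : ℝ))
    (o : G.edgeSet → V) (ho : ∀ e : G.edgeSet, o e ∈ (e : Sym2 V))
    (hA : ∀ v : V, {e : G.edgeSet | o e = v}.ncard ≤ A) :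
    (({e : Sym2 V | e ∈ G.edgeSet ∧ ∀ u ∈ e, u ∈ C ∧
        100 * (n : ℝ) ^ ((1 : ℝ) / 2) * Real.logb 2 n <
          (({v : V | G.Adj u v ∧ v ∉ C ∧
              (({w : V | G.Adj v w ∧ w ∈ C}.ncard : ℝ)) ≤ (n : ℝ) ^ ((1 : ℝ) / 4)}.ncard : ℝ))}.ncard : ℝ))
      ≤ (1 / 25) * ({e : Sym2 V | e ∈ G.edgeSet ∧ ∀ v ∈ e, v ∈ C}.ncard : ℝ) := by
  set R := Real.logb 2 n
  have hR : 0 < R := Real.logb_pos one_lt_two (by exact_mod_cast hn)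
  have hn0 : (0 : ℝ) < n := by positivity
  set L : Set V := {v | v ∉ C ∧ ((G.neighborSet v ∩ C).ncard : ℝ) ≤ (n : ℝ) ^ ((1 : ℝ) / 4)}
  set B : Set V := {u | u ∈ C ∧ 100 * (n : ℝ) ^ ((1 : ℝ) / 2) * R < (G.neighborSet u ∩ L).ncard}
  change (({e | e ∈ G.edgeSet ∧ ∀ u ∈ e, u ∈ B}.ncard : ℝ) ≤
    1 / 25 * {e | e ∈ G.edgeSet ∧ ∀ u ∈ e, u ∈ C}.ncard)
  have hEB := G.ncard_edges_within_le_of_orientation B A o ho hA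
  have hEC := G.ncard_mul_le_two_mul_ncard_edges_within hdeg
  have hBL := G.ncard_mul_le_card_mul_of_neighbor_bounds (B := B) (C := C) (L := L)
    (by positivity) (fun u hu => hu.1) (fun v hv => hv.2) (fun u hu => hu.2.le)
  have hB : (B.ncard : ℝ) * (100 * R) ≤ k := by
    have hsplit : (n : ℝ) * n ^ ((1 : ℝ) / 4) = n ^ ((1 : ℝ) / 2) * n ^ ((3 : ℝ) / 4) := by
      rw [← Real.rpow_add hn0, ← Real.rpow_one_add' hn0.le (by norm_num)]
      norm_num
    rw [hV, hsplit] at hBL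
    have := hBL.trans (mul_le_mul_of_nonneg_left hk34 (by positivity))
    nlinarith [Real.rpow_pos_of_pos hn0 ((1 : ℝ) / 2)]
  rw [hk] at hEC
  have hA_B : (A : ℝ) * B.ncard * (100 * R) ≤
      1 / 25 * {e | e ∈ G.edgeSet ∧ ∀ u ∈ e, u ∈ C}.ncard * (100 * R) :=
    calc (A : ℝ) * B.ncard * (100 * R) = A * (B.ncard * (100 * R)) := by ring
      _ ≤ A * k := by gcongr
      _ = 2 * R * (k * (A / (2 * R))) := by field_simp
      _ ≤ 2 * R * (2 * {e | e ∈ G.edgeSet ∧ ∀ u ∈ e, u ∈ C}.ncard) := by gcongr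
      _ = _ := by ring
  calc ({e | e ∈ G.edgeSet ∧ ∀ u ∈ e, u ∈ B}.ncard : ℝ) ≤ A * B.ncard := by exact_mod_cast hEB
    _ ≤ _ := le_of_mul_le_mul_right hA_B (by positivity)
end

section
/- Let p ≥ 2 and s ≥ 1 be natural numbers and let a, b be two distinct elements of a set of size s. Then the number of functions f from {1, …, p} to the s-element set such that both a and b lie in the range of f is at most p²·s^{p−2}. -/
/-- The number of functions `f : Fin p → Fin s` whose range contains two given
distinct elements `a, b` is at most `p² · s^(p-2)`. -/
theorem stmt6 (p s : ℕ) (hp : 2 ≤ p) (hs : 1 ≤ s) (a b : Fin s) (hab : a ≠ b) :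
    {f : Fin p → Fin s | a ∈ Set.range f ∧ b ∈ Set.range f}.ncard ≤
      p ^ 2 * s ^ (p - 2) := by
  classical
  have hset : {f : Fin p → Fin s | a ∈ Set.range f ∧ b ∈ Set.range f}.ncard
      = (Finset.univ.filter
          (fun f : Fin p → Fin s => a ∈ Set.range f ∧ b ∈ Set.range f)).card := by
    rw [Set.ncard_eq_toFinset_card']
    congr 1
    ext f
    simp
  rw [hset]
  have key : ∀ i j : Fin p,
      (Finset.univ.filter (fun f : Fin p → Fin s => f i = a ∧ f j = b)).card
        ≤ s ^ (p - 2) := by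
    intro i j
    by_cases hij : i = j
    · subst hij
      have : (Finset.univ.filter
          (fun f : Fin p → Fin s => f i = a ∧ f i = b)) = ∅ := by
        ext f
        simp only [Finset.mem_filter, Finset.mem_univ, true_and, Finset.notMem_empty,
          iff_false]
        rintro ⟨h1, h2⟩
        exact hab (h1 ▸ h2 ▸ rfl)
      simp [this]
    · have hcardT : Fintype.card ({i, j}ᶜ : Set (Fin p)) = p - 2 := by
        rw [Fintype.card_compl_set]
        have : Fintype.card ({i, j} : Set (Fin p)) = 2 := by
          simp [Set.card_insert, hij]
        rw [this, Fintype.card_fin]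
      calc (Finset.univ.filter
              (fun f : Fin p → Fin s => f i = a ∧ f j = b)).card
          ≤ (Finset.univ : Finset (({i, j}ᶜ : Set (Fin p)) → Fin s)).card := by
            apply Finset.card_le_card_of_injOn (fun f => fun t => f t.1)
              (by intro f _; exact Finset.mem_univ _)
            intro f hf g hg h
            simp only [Finset.mem_coe, Finset.mem_filter, Finset.mem_univ, true_and] at hf hg
            funext x
            by_cases hx : x = i
            · subst hx; rw [hf.1, hg.1]
            by_cases hx' : x = j
            · subst hx'; rw [hf.2, hg.2]
            · exact congrFun h ⟨x, by simp [hx, hx']⟩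
        _ = s ^ (p - 2) := by
            rw [Finset.card_univ, Fintype.card_fun, hcardT, Fintype.card_fin]
  have hsubset : (Finset.univ.filter
      (fun f : Fin p → Fin s => a ∈ Set.range f ∧ b ∈ Set.range f))
      ⊆ (Finset.univ : Finset (Fin p × Fin p)).biUnion
          (fun ij => Finset.univ.filter
            (fun f : Fin p → Fin s => f ij.1 = a ∧ f ij.2 = b)) := by
    intro f hf
    simp only [Finset.mem_filter, Finset.mem_univ, true_and] at hf
    obtain ⟨⟨i, hi⟩, ⟨j, hj⟩⟩ := hf
    simp only [Finset.mem_biUnion, Finset.mem_univ, Finset.mem_filter, true_and]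
    exact ⟨(i, j), hi, hj⟩
  calc (Finset.univ.filter
          (fun f : Fin p → Fin s => a ∈ Set.range f ∧ b ∈ Set.range f)).card
      ≤ ((Finset.univ : Finset (Fin p × Fin p)).biUnion
          (fun ij => Finset.univ.filter
            (fun f : Fin p → Fin s => f ij.1 = a ∧ f ij.2 = b))).card :=
        Finset.card_le_card hsubset
    _ ≤ ∑ ij : Fin p × Fin p, (Finset.univ.filter
          (fun f : Fin p → Fin s => f ij.1 = a ∧ f ij.2 = b)).card :=
        Finset.card_biUnion_le
    _ ≤ ∑ _ij : Fin p × Fin p, s ^ (p - 2) :=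
        Finset.sum_le_sum (fun ij _ => key ij.1 ij.2)
    _ = p ^ 2 * s ^ (p - 2) := by
        simp [Finset.sum_const, Fintype.card_prod, Fintype.card_fin, sq, mul_assoc]
end
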